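/- arXiv:2103.08839 — 3 statements merged into one kernel-verified Lean document; each statement's English description precedes it below -/
import Mathlib

section
/- Let (M, Y) be a rigid cotorsion pair on C. Then H = CoCone(M, M) is closed under direct summands: if A ⊕ B belongs to H, then A belongs to H. -/
open CategoryTheory CategoryTheory.Limits Opposite

attribute [local instance] CategoryTheory.Limits.HasFiniteBiproducts.of_hasFiniteProducts

noncomputable section

universe v u

variable {C : Type u} [Category.{v} C] [Abelian C]

/-- `f`, `g` form a short exact sequence `0 ⟶ X ⟶ Y ⟶ Z ⟶ 0`. -/
def IsSES {X Y Z : C} (f : X ⟶ Y) (g : Y ⟶ Z) : Prop :=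
  ∃ w : f ≫ g = 0, (ShortComplex.mk f g w).ShortExact

/-- A morphism `f : P ⟶ A` is right minimal if every endomorphism `g` of `P`
with `f ∘ g = f` is an isomorphism. -/
def RightMinimal {P A : C} (f : P ⟶ A) : Prop :=
  ∀ g : P ⟶ P, g ≫ f = f → IsIso g

/-- A morphism `f : A ⟶ I` is left minimal if every endomorphism `g` of `I`
with `g ∘ f = f` is an isomorphism. -/
def LeftMinimal {A I : C} (f : A ⟶ I) : Prop :=
  ∀ g : I ⟶ I, f ≫ g = f → IsIso g

/-- The category `C` is Krull–Schmidt: every nonzero object is a finite direct sum of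
objects with local endomorphism rings. -/
def IsKrullSchmidt (C : Type u) [Category.{v} C] [Abelian C] : Prop :=
  ∀ A : C, ¬ IsZero A → ∃ (n : ℕ) (f : Fin n → C),
    (∀ i, IsLocalRing (End (f i))) ∧ Nonempty (A ≅ ⨁ f)

/-- A subcategory (given by a predicate on objects, i.e. a full subcategory closed
under isomorphisms) which is closed under finite direct sums and direct summands. -/
structure IsAdditiveSubcat (S : C → Prop) : Prop where
  of_iso : ∀ {X Y : C}, (X ≅ Y) → S X → S Y
  sum_mem : ∀ {X Y : C}, S X → S Y → S (X ⊞ Y)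
  summands_mem : ∀ {X Y : C}, S (X ⊞ Y) → S X ∧ S Y

section Ext

variable (k : Type*) [Field k] [Linear k C] [EnoughProjectives C]

/-- Vanishing of `Ext^n(A, B)`. -/
def extVanishes (n : ℕ) (A B : C) : Prop :=
  IsZero (((_root_.Ext k C n).obj (op A)).obj B)

/-- `(M, Y)` is a cotorsion pair: `Ext¹(M, Y) = 0` and every object admits the two
approximation short exact sequences. -/
structure IsCotorsionPair (M Y : C → Prop) : Prop where
  subcatM : IsAdditiveSubcat M
  subcatY : IsAdditiveSubcat Y
  ext_vanishes : ∀ ⦃X Z : C⦄, M X → Y Z → extVanishes k 1 X Z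
  exists_res : ∀ A : C, ∃ (Y₀ M₀ : C) (f : Y₀ ⟶ M₀) (g : M₀ ⟶ A),
      Y Y₀ ∧ M M₀ ∧ IsSES f g
  exists_cores : ∀ A : C, ∃ (Y₀ M₀ : C) (f : A ⟶ Y₀) (g : Y₀ ⟶ M₀),
      Y Y₀ ∧ M M₀ ∧ IsSES f g

/-- A rigid cotorsion pair: moreover `Ext¹(M, M') = 0`. -/
def IsRigidCotorsionPair (M Y : C → Prop) : Prop :=
  IsCotorsionPair k M Y ∧ ∀ ⦃X Z : C⦄, M X → M Z → extVanishes k 1 X Z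

/-- Membership in `CoCone(M, N)`: objects `A` admitting a short exact sequence
`0 ⟶ A ⟶ M₁ ⟶ N₂ ⟶ 0` with `M₁ ∈ M` and `N₂ ∈ N`. -/
def MemCoCone (M N : C → Prop) (A : C) : Prop :=
  ∃ (B₁ B₂ : C) (f : A ⟶ B₁) (g : B₁ ⟶ B₂), M B₁ ∧ N B₂ ∧ IsSES f g

/-- Membership in `Cone(M, N)`: objects `A` admitting a short exact sequence
`0 ⟶ M₁ ⟶ N₂ ⟶ A ⟶ 0` with `M₁ ∈ M` and `N₂ ∈ N`. -/
def MemCone (M N : C → Prop) (A : C) : Prop :=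
  ∃ (B₁ B₂ : C) (f : B₁ ⟶ B₂) (g : B₂ ⟶ A), M B₁ ∧ N B₂ ∧ IsSES f g

/-- A morphism factors through an object of the subcategory `S`. -/
def FactorsThruSubcat (S : C → Prop) {X Z : C} (u : X ⟶ Z) : Prop :=
  ∃ (Y' : C) (w : X ⟶ Y') (v : Y' ⟶ Z), S Y' ∧ w ≫ v = u

/-- `A` has no nonzero direct summand belonging to `S`. -/
def NoNonzeroSummandIn (S : C → Prop) (A : C) : Prop :=
  ∀ (B B' : C), (A ≅ B ⊞ B') → S B → IsZero B

/-- `M` is fully rigid: it fits in a rigid cotorsion pair `(M, Y)` with `M` different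
from the subcategory of projective objects, and every indecomposable object of `C`
belongs either to `Y` or to `H = CoCone(M, M)`. -/
def IsFullyRigid (M Y : C → Prop) : Prop :=
  IsRigidCotorsionPair k M Y ∧ M ≠ (fun X : C => Projective X) ∧
    ∀ A : C, Indecomposable A → Y A ∨ MemCoCone M M A

/-- `M` is `n`-rigid: `Ext^i(M, M') = 0` for all `1 ≤ i ≤ n`. -/
def IsNRigid (n : ℕ) (M : C → Prop) : Prop :=
  ∀ i, 1 ≤ i → i ≤ n → ∀ ⦃X Z : C⦄, M X → M Z → extVanishes k i X Z

/-- `M` is `d`-cluster-tilting. -/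
structure IsDClusterTilting (d : ℕ) (M : C → Prop) : Prop where
  subcatM : IsAdditiveSubcat M
  contravariantly_finite : ∀ A : C, ∃ (M₀ : C) (f : M₀ ⟶ A), M M₀ ∧
      ∀ (M' : C) (g : M' ⟶ A), M M' → ∃ h : M' ⟶ M₀, h ≫ f = g
  covariantly_finite : ∀ A : C, ∃ (M₀ : C) (f : A ⟶ M₀), M M₀ ∧
      ∀ (M' : C) (g : A ⟶ M'), M M' → ∃ h : M₀ ⟶ M', f ≫ h = g
  mem_iff_ext_right : ∀ X : C, M X ↔
      ∀ i, 1 ≤ i → i ≤ d - 1 → ∀ ⦃M₀ : C⦄, M M₀ → extVanishes k i X M₀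
  mem_iff_ext_left : ∀ X : C, M X ↔
      ∀ i, 1 ≤ i → i ≤ d - 1 → ∀ ⦃M₀ : C⦄, M M₀ → extVanishes k i M₀ X

/-- The subcategories `M_l`: `M₀ = M` and `M_l = CoCone(M, M_{l-1})`. -/
def MSeq (M : C → Prop) : ℕ → C → Prop
  | 0 => M
  | l + 1 => MemCoCone M (MSeq M l)

end Ext

/-- `Ext¹(X, Z) = 0`, expressed by the splitting of all short exact sequences
`0 ⟶ Z ⟶ E ⟶ X ⟶ 0`. -/
def Ext1Vanishes (X Z : C) : Prop :=
  ∀ (E : C) (f : Z ⟶ E) (g : E ⟶ X), IsSES f g → ∃ s : X ⟶ E, s ≫ g = 𝟙 X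

/-!
Let `ι : A ⊞ B ⟶ M₀` be the monomorphism of `0 ⟶ A ⊞ B ⟶ M₀ ⟶ M₁ ⟶ 0`. Since
`Ext¹(M₁, M₀) = 0`, the idempotent `e` of `A ⊞ B` projecting onto `A` extends along `ι` to an
endomorphism `ε` of `M₀`. The pairs `(a, b)` of endomorphisms with `ι ≫ b = a ≫ ι` form a
finite-dimensional algebra, and the Fitting idempotent of `(e, ε)` in it is `(e, E)` for an
idempotent `E` of `M₀`. Splitting `E` exhibits a summand `N` of `M₀` and a monomorphism `A ⟶ N`
whose cokernel is a retract of `M₁`; both then lie in `M`.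
-/

/-- The idempotent of the Fitting decomposition of `x`: `x` is invertible on `f R` and nilpotent
on `(1 - f) R`. -/
structure IsFittingIdempotent {R : Type*} [Ring R] (x f : R) : Prop where
  isIdempotentElem : IsIdempotentElem f
  commute : Commute x f
  exists_eq_mul : ∃ r, f = x * r
  isNilpotent : IsNilpotent (x * (1 - f))

namespace IsFittingIdempotent

variable {R S : Type*} [Ring R] [Ring S] {x f : R}

theorem map {F : Type*} [FunLike F R S] [RingHomClass F R S] (hf : IsFittingIdempotent x f)
    (φ : F) : IsFittingIdempotent (φ x) (φ f) where
  isIdempotentElem := hf.isIdempotentElem.map φ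
  commute := hf.commute.map φ
  exists_eq_mul := by
    obtain ⟨r, rfl⟩ := hf.exists_eq_mul
    exact ⟨φ r, map_mul φ x r⟩
  isNilpotent := by simpa using hf.isNilpotent.map φ

theorem eq_of_isIdempotentElem (hf : IsFittingIdempotent x f) (hx : IsIdempotentElem x) :
    f = x := by
  obtain ⟨r, hr⟩ := hf.exists_eq_mul
  have hxf : x * f = f := by rw [hr, ← mul_assoc, hx.eq]
  refine (eq_of_isNilpotent_sub_of_isIdempotentElem_of_commute hx hf.isIdempotentElem
    ?_ hf.commute).symm
  simpa [mul_sub, hxf] using hf.isNilpotent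

end IsFittingIdempotent

theorem IsArtinianRing.exists_isFittingIdempotent {R : Type*} [CommRing R] [IsArtinianRing R]
    (x : R) : ∃ f, IsFittingIdempotent x f := by
  obtain ⟨n, y, hy⟩ := IsArtinian.exists_pow_succ_smul_dvd x (1 : R)
  simp only [smul_eq_mul, mul_one, Nat.succ_eq_add_one] at hy
  have hpow : ∀ j, x ^ (n + j) * y ^ j = x ^ n := by
    intro j
    induction j with
    | zero => simp
    | succ j ih => linear_combination (x ^ j * y ^ j) * hy + ih
  have hidem : IsIdempotentElem (x ^ (n + 1) * y ^ (n + 1)) := by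
    unfold IsIdempotentElem
    linear_combination y ^ n * hpow (n + 2) - y ^ n * hpow 1
  refine ⟨x ^ (n + 1) * y ^ (n + 1), hidem, .all _ _, ⟨x ^ n * y ^ (n + 1), by ring⟩,
    n + 1, ?_⟩
  rw [mul_pow, hidem.one_sub.pow_succ_eq]
  linear_combination (-x) * hpow (n + 1)

open Polynomial in
/-- The Fitting idempotent of `x` is found in the Artinian ring `k[x]`. -/
theorem exists_isFittingIdempotent (k : Type*) {R : Type*} [CommRing k] [IsArtinianRing k]
    [Ring R] [Algebra k R] [Module.Finite k R] (x : R) : ∃ f, IsFittingIdempotent x f := by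
  let φ := Ideal.kerLiftAlg (aeval (R := k) x)
  have hφ : Function.Injective φ := Ideal.kerLiftAlg_injective _
  have := Module.Finite.of_injective φ.toLinearMap hφ
  have : IsArtinianRing (k[X] ⧸ RingHom.ker (aeval (R := k) x)) := .of_finite k _
  obtain ⟨f, hf⟩ :=
    IsArtinianRing.exists_isFittingIdempotent (Ideal.Quotient.mk (RingHom.ker (aeval (R := k) x)) X)
  have hX : φ (Ideal.Quotient.mk _ X) = x := by rw [Ideal.kerLiftAlg_mk, aeval_X]
  exact ⟨φ f, by simpa only [hX] using hf.map φ⟩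

section Intertwiners

variable (k : Type*) [CommRing k] [Linear k C]

def intertwiners {X Z : C} (ι : X ⟶ Z) : Subalgebra k (End X × End Z) where
  carrier := {p | ι ≫ p.2 = p.1 ≫ ι}
  mul_mem' := by
    rintro ⟨a, b⟩ ⟨a', b'⟩ (h : ι ≫ b = a ≫ ι) (h' : ι ≫ b' = a' ≫ ι)
    change ι ≫ b' ≫ b = (a' ≫ a) ≫ ι
    rw [reassoc_of% h', h, Category.assoc]
  add_mem' := by
    rintro ⟨a, b⟩ ⟨a', b'⟩ (h : ι ≫ b = a ≫ ι) (h' : ι ≫ b' = a' ≫ ι)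
    change ι ≫ (b + b') = (a + a') ≫ ι
    rw [Preadditive.comp_add, Preadditive.add_comp, h, h']
  algebraMap_mem' c := by
    change ι ≫ (c • 𝟙 Z) = (c • 𝟙 X) ≫ ι
    rw [Linear.comp_smul, Linear.smul_comp, Category.comp_id, Category.id_comp]

theorem exists_idempotent_comp_eq_comp [IsArtinianRing k] {X Z : C}
    [Module.Finite k (X ⟶ X)] [Module.Finite k (Z ⟶ Z)] (ι : X ⟶ Z) {e : X ⟶ X} (he : e ≫ e = e)
    {ε : Z ⟶ Z} (hε : ι ≫ ε = e ≫ ι) : ∃ E : Z ⟶ Z, E ≫ E = E ∧ ι ≫ E = e ≫ ι := by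
  have : Module.Finite k (End X × End Z) := inferInstanceAs (Module.Finite k ((X ⟶ X) × (Z ⟶ Z)))
  have := Module.Finite.of_injective (intertwiners k ι).val.toLinearMap Subtype.val_injective
  obtain ⟨f, hf⟩ := exists_isFittingIdempotent k (⟨(e, ε), hε⟩ : intertwiners k ι)
  have hfe : IsFittingIdempotent (R := End X) e f.1.1 :=
    hf.map ((AlgHom.fst k _ _).comp (intertwiners k ι).val)
  refine ⟨f.1.2, ?_, hfe.eq_of_isIdempotentElem he ▸ f.2⟩
  exact congrArg (fun p : intertwiners k ι => p.1.2) hf.isIdempotentElem.eq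

end Intertwiners

theorem isSES_cokernel {X Y : C} (f : X ⟶ Y) [Mono f] : IsSES f (cokernel.π f) :=
  ⟨cokernel.condition f, .mk' (ShortComplex.exact_of_g_is_cokernel _ (cokernelIsCokernel f))
    inferInstance inferInstance⟩

theorem IsSES.pushout_inr {S E Q N : C} {f : S ⟶ E} {g : E ⟶ Q} (hS : IsSES f g) (u : S ⟶ N) :
    IsSES (pushout.inr f u) (pushout.desc g 0 (by rw [Limits.comp_zero]; exact hS.fst)) := by
  obtain ⟨w, hS⟩ := hS
  have := hS.mono_f
  have := hS.epi_g
  have : Epi (pushout.desc g 0 (by rw [Limits.comp_zero]; exact w) : pushout f u ⟶ Q) :=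
    have : Epi (pushout.inl f u ≫ pushout.desc g 0 _) := by rwa [pushout.inl_desc]
    epi_of_epi (pushout.inl f u) _
  refine ⟨pushout.inr_desc _ _ _, .mk' (ShortComplex.exact_of_g_is_cokernel _ ?_)
    inferInstance inferInstance⟩
  refine CokernelCofork.IsColimit.ofπ _ _
    (fun h hh => hS.exact.desc (pushout.inl f u ≫ h) (by
      change f ≫ pushout.inl f u ≫ h = 0
      rw [pushout.condition_assoc, hh, Limits.comp_zero]))
    (fun h hh => ?_) (fun h hh m hm => ?_)
  · apply pushout.hom_ext
    · rw [pushout.inl_desc_assoc]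
      exact hS.exact.g_desc _ _
    · rw [pushout.inr_desc_assoc, zero_comp, hh]
  · subst hm
    rw [← cancel_epi g]
    exact ((hS.exact.g_desc _ _).trans (pushout.inl_desc_assoc ..)).symm

theorem IsAdditiveSubcat.mem_of_retract {S : C → Prop} (hS : IsAdditiveSubcat S) {X Y : C}
    (h : Retract X Y) (hY : S Y) : S X :=
  (hS.summands_mem (hS.of_iso (biprod.uniqueUpToIso _ _
    (isBilimitBinaryBiconeOfIsSplitMonoOfCokernel (cokernelIsCokernel h.i))) hY)).1

theorem memCoCone_of_retract_of_idempotent {M : C → Prop} (hM : IsAdditiveSubcat M)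
    {X' X Z Q : C} (h : Retract X' X) {ι : X ⟶ Z} {π : Z ⟶ Q} (hS : IsSES ι π) (hZ : M Z) (hQ : M Q)
    {E : Z ⟶ Z} (hE : E ≫ E = E) (hιE : ι ≫ E = h.r ≫ h.i ≫ ι) : MemCoCone M M X' := by
  obtain ⟨w, hS⟩ := hS
  have := hS.mono_f
  have := hS.epi_g
  obtain ⟨N, s, r, hsr, hrs⟩ := IsIdempotentComplete.idempotents_split Z E hE
  let a := h.i ≫ ι ≫ r
  have has : a ≫ s = h.i ≫ ι := by simp only [a, Category.assoc, hrs, hιE, h.retract_assoc]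
  have hιr : ι ≫ r = h.r ≫ a := by
    have hEr : E ≫ r = r := by rw [← hrs, Category.assoc, hsr, Category.comp_id]
    rw [← hEr, reassoc_of% hιE]
  have : Mono a :=
    have : Mono (a ≫ s) := has ▸ inferInstance
    mono_of_mono a s
  let ρ : Q ⟶ cokernel a := hS.exact.desc (r ≫ cokernel.π a) (by
    change ι ≫ r ≫ cokernel.π a = 0
    rw [reassoc_of% hιr, cokernel.condition, Limits.comp_zero])
  have hπρ : π ≫ ρ = r ≫ cokernel.π a := hS.exact.g_desc _ _
  let c : Retract (cokernel a) Q :=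
    { i := cokernel.desc a (s ≫ π) (by rw [reassoc_of% has, w, Limits.comp_zero])
      r := ρ
      retract := by
        rw [← cancel_epi (cokernel.π a), cokernel.π_desc_assoc, Category.assoc, hπρ,
          reassoc_of% hsr, Category.comp_id] }
  exact ⟨N, cokernel a, a, cokernel.π a, hM.mem_of_retract ⟨s, r, hsr⟩ hZ,
    hM.mem_of_retract c hQ, isSES_cokernel a⟩

section Ext

variable (k : Type*) [Field k] [Linear k C] [EnoughProjectives C]

theorem CategoryTheory.ProjectiveResolution.exists_d_comp_eq_of_extVanishes {Q N : C}
    (P : ProjectiveResolution Q) (hext : extVanishes k 1 Q N) (φ : P.complex.X 1 ⟶ N)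
    (hφ : P.complex.d 2 1 ≫ φ = 0) : ∃ ψ : P.complex.X 0 ⟶ N, P.complex.d 1 0 ≫ ψ = φ := by
  have hexact : (P.complex.linearYonedaObj k N).ExactAt 1 :=
    (HomologicalComplex.exactAt_iff_isZero_homology _ _).2
      (IsZero.of_iso hext (P.isoExt (R := k) 1 N).symm)
  rw [HomologicalComplex.exactAt_iff' _ 0 1 2 (by simp) (by simp),
    ShortComplex.moduleCat_exact_iff] at hexact
  exact hexact (show ((P.complex.linearYonedaObj k N).sc' 0 1 2).X₂ from φ) hφ

theorem exists_retraction_of_extVanishes {N E Q : C} {j : N ⟶ E} {q : E ⟶ Q}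
    (hS : IsSES j q) (hext : extVanishes k 1 Q N) : ∃ r : E ⟶ N, j ≫ r = 𝟙 N := by
  obtain ⟨w, hS⟩ := hS
  have := hS.mono_f
  have := hS.epi_g
  let P := ProjectiveResolution.of Q
  let π₀ : P.complex.X 0 ⟶ Q := P.π.f 0
  have : Epi π₀ := inferInstanceAs (Epi (P.π.f 0))
  obtain ⟨t, ht⟩ : ∃ t : P.complex.X 0 ⟶ E, t ≫ q = π₀ :=
    ⟨Projective.factorThru _ q, Projective.factorThru_comp _ _⟩
  have hdt : (P.complex.d 1 0 ≫ t) ≫ q = 0 := by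
    rw [Category.assoc, ht]
    exact P.complex_d_comp_π_f_zero
  let φ := hS.exact.lift (P.complex.d 1 0 ≫ t) hdt
  have hφ : φ ≫ j = P.complex.d 1 0 ≫ t := hS.exact.lift_f _ _
  have hcocycle : P.complex.d 2 1 ≫ φ = 0 := by
    rw [← cancel_mono j, Category.assoc, hφ, HomologicalComplex.d_comp_d_assoc, zero_comp,
      zero_comp]
  obtain ⟨ψ, hψ⟩ := P.exists_d_comp_eq_of_extVanishes k hext φ hcocycle
  -- `t - ψ ≫ j` kills the boundaries, so it descends to a section of `q`
  have hdt' : P.complex.d 1 0 ≫ (t - ψ ≫ j) = 0 := by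
    rw [Preadditive.comp_sub, reassoc_of% hψ, hφ, sub_self]
  let s : Q ⟶ E := P.isColimitCokernelCofork.desc (CokernelCofork.ofπ _ hdt')
  have hπs : π₀ ≫ s = t - ψ ≫ j := P.isColimitCokernelCofork.fac _ WalkingParallelPair.one
  have hsq : s ≫ q = 𝟙 Q := by
    rw [← cancel_epi π₀, reassoc_of% hπs, Category.comp_id, Preadditive.sub_comp,
      Category.assoc, w, Limits.comp_zero, sub_zero, ht]
  let σ := ShortComplex.Splitting.ofExactOfSection _ hS.exact s hsq ‹_›
  exact ⟨σ.r, σ.f_r⟩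

theorem exists_lift_of_extVanishes {S E Q N : C} {f : S ⟶ E} {g : E ⟶ Q} (hS : IsSES f g)
    (hext : extVanishes k 1 Q N)
    (u : S ⟶ N) : ∃ v : E ⟶ N, f ≫ v = u := by
  obtain ⟨r, hr⟩ := exists_retraction_of_extVanishes k (hS.pushout_inr u) hext
  exact ⟨pushout.inl f u ≫ r, by rw [pushout.condition_assoc, hr, Category.comp_id]⟩

end Ext

theorem stmt2_general (k : Type*) [Field k] [Linear k C]
    [EnoughProjectives C]
    (hfin : ∀ X Y : C, Module.Finite k (X ⟶ Y))
    (M Y : C → Prop) (hpair : IsRigidCotorsionPair k M Y)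
    (A B : C) (hAB : MemCoCone M M (A ⊞ B)) :
    MemCoCone M M A := by
  obtain ⟨M₀, M₁, ι, π, hM₀, hM₁, hS⟩ := hAB
  have := hfin M₀ M₀
  have := hfin (A ⊞ B) (A ⊞ B)
  let p : Retract A (A ⊞ B) := ⟨biprod.inl, biprod.fst, biprod.inl_fst⟩
  obtain ⟨ε, hε⟩ := exists_lift_of_extVanishes k hS (hpair.2 hM₁ hM₀) (p.r ≫ p.i ≫ ι)
  obtain ⟨E, hE, hιE⟩ := exists_idempotent_comp_eq_comp k ι (e := p.r ≫ p.i)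
    (by rw [Category.assoc, p.retract_assoc]) (by rw [hε, Category.assoc])
  exact memCoCone_of_retract_of_idempotent hpair.1.subcatM p hS hM₀ hM₁ hE
    (by rw [hιE, Category.assoc])

theorem stmt2 (k : Type*) [Field k] [Linear k C]
    [EnoughProjectives C] [EnoughInjectives C]
    (hKS : IsKrullSchmidt C) (hfin : ∀ X Y : C, Module.Finite k (X ⟶ Y))
    (M Y : C → Prop) (hpair : IsRigidCotorsionPair k M Y)
    (A B : C) (hAB : MemCoCone M M (A ⊞ B)) :
    MemCoCone M M A :=
  stmt2_general k hfin M Y hpair A B hAB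
end
end

section
/- Let (M, Y) be a rigid cotorsion pair on C. Suppose given short exact sequences 0 → Y₁ → B →(m) A → 0, 0 → Y₁ → M₁ →(n) Y → 0, 0 → B →(h) M₁ →(i) M → 0 and 0 → A →(f) Y →(g) M → 0 with Y₁, Y ∈ Y and M₁, M ∈ M, such that f ∘ m = n ∘ h, g ∘ n = i, and the two sequences with kernel Y₁ are compatible (the square with vertical maps h and f commutes over the identity of Y₁). Then for every object Z and every morphism β : A → Z such that β ∘ m factors through an object of Y, the morphism β itself factors through an object of Y (indeed β factors through f : A → Y). (That is, the image of m in the quotient C/Y is an epimorphism.) -/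
open CategoryTheory CategoryTheory.Limits Opposite

attribute [local instance] CategoryTheory.Limits.HasFiniteBiproducts.of_hasFiniteProducts

noncomputable section

universe v u

variable {C : Type u} [Category.{v} C] [Abelian C]

/-! If `m ≫ β = w ≫ v` with `w : B ⟶ Y'`, `Y' ∈ Y`, then `Ext¹(M₀, Y') = 0` lets `w` extend
along `h : B ⟶ M₁`. The extension composed with `v` vanishes on `Y₁`, so it descends along the
cokernel `n : M₁ ⟶ Y₀` to some `u : Y₀ ⟶ Z`; since `m` is epi, `f ≫ u = β` follows from
`m ≫ f = h ≫ n`. -/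

lemma IsSES.exists_desc {X₁ X₂ X₃ W : C} {f : X₁ ⟶ X₂} {g : X₂ ⟶ X₃} (hs : IsSES f g)
    (x : X₂ ⟶ W) (hx : f ≫ x = 0) : ∃ u : X₃ ⟶ W, g ≫ u = x :=
  have : Epi g := hs.2.epi_g
  ⟨hs.2.exact.desc x hx, hs.2.exact.g_desc x hx⟩

lemma IsSES.exists_pushout {X₁ X₂ X₃ : C} {f : X₁ ⟶ X₂} {g : X₂ ⟶ X₃} (hs : IsSES f g)
    {Z : C} (w : X₁ ⟶ Z) :
    ∃ (E : C) (a : Z ⟶ E) (b : X₂ ⟶ E) (e : E ⟶ X₃), w ≫ a = f ≫ b ∧ IsSES a e := by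
  obtain ⟨hfg, hS⟩ := hs
  have : Mono f := hS.mono_f
  have : Epi g := hS.epi_g
  let e : pushout w f ⟶ X₃ := pushout.desc 0 g (by rw [comp_zero, hfg])
  have hae : pushout.inl w f ≫ e = 0 := pushout.inl_desc _ _ _
  have hbe : pushout.inr w f ≫ e = g := pushout.inr_desc _ _ _
  have : Epi e := epi_of_epi_fac hbe
  have hdesc : ∀ {Q : C} (c : pushout w f ⟶ Q), pushout.inl w f ≫ c = 0 →
      f ≫ pushout.inr w f ≫ c = 0 := fun c hc => by
    rw [← pushout.condition_assoc, hc, comp_zero]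
  have hfac : ∀ {Q : C} (c : pushout w f ⟶ Q) (hc : pushout.inl w f ≫ c = 0),
      e ≫ hS.exact.desc (pushout.inr w f ≫ c) (hdesc c hc) = c := fun c hc => by
    apply pushout.hom_ext
    · rw [reassoc_of% hae, zero_comp, hc]
    · rw [reassoc_of% hbe]
      exact hS.exact.g_desc _ _
  refine ⟨_, _, _, e, pushout.condition, hae, ?_⟩
  refine { exact := ShortComplex.exact_of_g_is_cokernel _ ?_ }
  exact CokernelCofork.IsColimit.ofπ _ _ (fun c hc => hS.exact.desc _ (hdesc c hc)) hfac
    (fun c hc m hm => by rw [← cancel_epi e, hm, hfac c hc])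

lemma Ext1Vanishes.exists_extension {X₁ X₂ X₃ Z : C} (hv : Ext1Vanishes X₃ Z)
    {f : X₁ ⟶ X₂} {g : X₂ ⟶ X₃} (hs : IsSES f g) (w : X₁ ⟶ Z) :
    ∃ w' : X₂ ⟶ Z, f ≫ w' = w := by
  obtain ⟨E, a, b, e, hab, hE⟩ := hs.exists_pushout w
  obtain ⟨s, hse⟩ := hv E a e hE
  let σ := ShortComplex.Splitting.ofExactOfSection _ hE.2.exact s hse hE.2.mono_f
  exact ⟨b ≫ σ.r, by rw [← reassoc_of% hab, σ.f_r, Category.comp_id]⟩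

section

variable (k : Type*) [Field k] [Linear k C] [EnoughProjectives C]

lemma CategoryTheory.ProjectiveResolution.exists_d_comp_eq_of_extVanishes_s5 {X Z : C}
    (P : ProjectiveResolution X) (hv : extVanishes k 1 X Z)
    (q : P.complex.X 1 ⟶ Z) (hq : P.complex.d 2 1 ≫ q = 0) :
    ∃ t : P.complex.X 0 ⟶ Z, P.complex.d 1 0 ≫ t = q := by
  have hH : IsZero ((P.complex.linearYonedaObj k Z).homology 1) :=
    hv.of_iso (P.isoExt 1 Z).symm
  have hex : ((P.complex.linearYonedaObj k Z).sc' 0 1 2).Exact := by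
    rwa [← HomologicalComplex.exactAt_iff' _ 0 1 2 (by simp) (by simp),
      HomologicalComplex.exactAt_iff_isZero_homology]
  exact (ShortComplex.moduleCat_exact_iff _).mp hex q hq

lemma ext1Vanishes_of_extVanishes {X Z : C} (hv : extVanishes k 1 X Z) :
    Ext1Vanishes X Z := by
  rintro E f g ⟨hfg, hS⟩
  have : Mono f := hS.mono_f
  have : Epi g := hS.epi_g
  let P := ProjectiveResolution.of X
  let ε : P.complex.X 0 ⟶ X := P.π.f 0
  have : Epi ε := inferInstanceAs (Epi (P.π.f 0))
  have hdε : P.complex.d 1 0 ≫ ε = 0 := P.complex_d_comp_π_f_zero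
  let p : P.complex.X 0 ⟶ E := Projective.factorThru ε g
  have hpg : p ≫ g = ε := Projective.factorThru_comp _ _
  -- `q` is a 1-cocycle representing the class of the extension; it is a coboundary `d ≫ t`
  let q : P.complex.X 1 ⟶ Z := hS.exact.lift (P.complex.d 1 0 ≫ p) (by simp [hpg, hdε])
  have hqf : q ≫ f = P.complex.d 1 0 ≫ p := hS.exact.lift_f _ _
  obtain ⟨t, ht⟩ := P.exists_d_comp_eq_of_extVanishes_s5 k hv q
    (by rw [← cancel_mono f]; simp [hqf])
  obtain ⟨s, hs⟩ : ∃ s : X ⟶ E, ε ≫ s = p - t ≫ f :=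
    ⟨_, (Cofork.IsColimit.desc' P.isColimitCokernelCofork (p - t ≫ f)
      (by rw [Preadditive.comp_sub, ← Category.assoc, ht, hqf, sub_self, zero_comp])).2⟩
  refine ⟨s, ?_⟩
  rw [← cancel_epi ε, reassoc_of% hs]
  simp [hpg, hfg]

end

theorem stmt5_general (k : Type*) [Field k] [Linear k C]
    [EnoughProjectives C]
    (M Y : C → Prop) (hpair : IsRigidCotorsionPair k M Y)
    {Y₁ B A M₁ Y₀ M₀ : C}
    (i₁ : Y₁ ⟶ B) (m : B ⟶ A) (i₂ : Y₁ ⟶ M₁) (n : M₁ ⟶ Y₀)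
    (h : B ⟶ M₁) (i : M₁ ⟶ M₀) (f : A ⟶ Y₀)
    (hY₀ : Y Y₀) (hM₀ : M M₀)
    (s₁ : IsSES i₁ m) (s₂ : IsSES i₂ n) (s₃ : IsSES h i)
    (c₁ : m ≫ f = h ≫ n) (c₃ : i₁ ≫ h = i₂)
    (Z : C) (β : A ⟶ Z) (hβ : FactorsThruSubcat Y (m ≫ β)) :
    FactorsThruSubcat Y β ∧ ∃ u : Y₀ ⟶ Z, f ≫ u = β := by
  obtain ⟨Y', w, v, hY', hwv⟩ := hβ
  obtain ⟨w', hw'⟩ :=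
    (ext1Vanishes_of_extVanishes k (hpair.1.ext_vanishes hM₀ hY')).exists_extension s₃ w
  obtain ⟨u, hu⟩ := s₂.exists_desc (w' ≫ v)
    (by rw [← c₃, Category.assoc, reassoc_of% hw', hwv, reassoc_of% s₁.1, zero_comp])
  have : Epi m := s₁.2.epi_g
  have hfu : f ≫ u = β := by
    rw [← cancel_epi m, reassoc_of% c₁, hu, reassoc_of% hw', hwv]
  exact ⟨⟨Y₀, f, u, hY₀, hfu⟩, u, hfu⟩

theorem stmt5 (k : Type*) [Field k] [Linear k C]
    [EnoughProjectives C] [EnoughInjectives C]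
    (hKS : IsKrullSchmidt C) (hfin : ∀ X Y : C, Module.Finite k (X ⟶ Y))
    (M Y : C → Prop) (hpair : IsRigidCotorsionPair k M Y)
    {Y₁ B A M₁ Y₀ M₀ : C}
    (i₁ : Y₁ ⟶ B) (m : B ⟶ A) (i₂ : Y₁ ⟶ M₁) (n : M₁ ⟶ Y₀)
    (h : B ⟶ M₁) (i : M₁ ⟶ M₀) (f : A ⟶ Y₀) (g : Y₀ ⟶ M₀)
    (hY₁ : Y Y₁) (hY₀ : Y Y₀) (hM₁ : M M₁) (hM₀ : M M₀)
    (s₁ : IsSES i₁ m) (s₂ : IsSES i₂ n) (s₃ : IsSES h i) (s₄ : IsSES f g)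
    (c₁ : m ≫ f = h ≫ n) (c₂ : n ≫ g = i) (c₃ : i₁ ≫ h = i₂)
    (Z : C) (β : A ⟶ Z) (hβ : FactorsThruSubcat Y (m ≫ β)) :
    FactorsThruSubcat Y β ∧ ∃ u : Y₀ ⟶ Z, f ≫ u = β :=
  stmt5_general k M Y hpair i₁ m i₂ n h i f hY₀ hM₀ s₁ s₂ s₃ c₁ c₃ Z β hβ
end
end

section
/- Let M be a subcategory of C containing all projective objects and satisfying Ext¹(M, M') = 0 for all M, M' ∈ M. Suppose an object Y admits a short exact sequence 0 → ΩY → P → Y → 0 with P projective, and ΩY admits a short exact sequence 0 → ΩY → M¹ → M² → 0 with M¹, M² ∈ M. Then there exists a short exact sequence 0 → M¹ → M² ⊕ P → Y → 0; in particular Y ∈ Cone(M, M). -/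
open CategoryTheory CategoryTheory.Limits Opposite

attribute [local instance] CategoryTheory.Limits.HasFiniteBiproducts.of_hasFiniteProducts

noncomputable section

universe v u

variable {C : Type u} [Category.{v} C] [Abelian C]

/-! Since `Ext¹(M₂, P) = 0`, the inclusion `ΩY ⟶ P` extends along `u : ΩY ⟶ M₁` to some
`t : M₁ ⟶ P` (push the sequence `0 ⟶ ΩY ⟶ M₁ ⟶ M₂ ⟶ 0` out along `ΩY ⟶ P` and split it).
Then `t` and the induced `M₂ ⟶ Y` form a morphism of short exact sequences which is the identity
on `ΩY`, so the square `M₁ ⟶ M₂, M₁ ⟶ P, M₂ ⟶ Y, P ⟶ Y` is a pushout. Its sequence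
`M₁ ⟶ M₂ ⊞ P ⟶ Y ⟶ 0` is exact, and `M₁ ⟶ M₂ ⊞ P` is mono because `t` is mono on `ker v = ΩY`. -/

lemma exists_isSES_pushout_inr {A B X Z : C} {u : A ⟶ B} {v : B ⟶ X} (huv : IsSES u v)
    (f : A ⟶ Z) : ∃ m : pushout u f ⟶ X, IsSES (pushout.inr u f) m := by
  obtain ⟨w, hS⟩ := huv
  have := hS.mono_f
  have := hS.epi_g
  let m : pushout u f ⟶ X := pushout.desc v 0 (by rw [w, comp_zero])
  have hinl : pushout.inl u f ≫ m = v := pushout.inl_desc _ _ _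
  have hinr : pushout.inr u f ≫ m = 0 := pushout.inr_desc _ _ _
  have : Epi m := epi_of_epi_fac hinl
  -- a map killing `inr` is determined by its restriction along `inl`, which kills `u`
  have hcoker : IsColimit (CokernelCofork.ofπ m hinr) :=
    CokernelCofork.IsColimit.ofπ _ _
      (fun φ hφ => hS.exact.desc (pushout.inl u f ≫ φ) (by
        rw [pushout.condition_assoc, hφ, comp_zero]))
      (fun φ hφ => pushout.hom_ext (by rw [reassoc_of% hinl]; exact hS.exact.g_desc _ _)
        (by rw [reassoc_of% hinr, zero_comp, hφ]))
      (fun φ hφ ψ hψ => by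
        rw [← cancel_epi v, hS.exact.g_desc, ← hψ, reassoc_of% hinl])
  exact ⟨m, hinr, .mk (ShortComplex.exact_of_g_is_cokernel _ hcoker)⟩

section ExtensionLemma

variable {k : Type*} [Field k] [Linear k C] [EnoughProjectives C]

/- Lift the augmentation `P₀ ⟶ X` of a projective resolution to `l : P₀ ⟶ E`; then `d₁ ≫ l`
factors through `f` as a 1-cocycle `c : P₁ ⟶ Z`. As `Ext¹(X, Z) = 0` it is a coboundary
`d₁ ≫ r`, and `l - r ≫ f` descends along the augmentation to a section of `q`. -/
lemma exists_section_of_extVanishes {X Z E : C} (hv : extVanishes k 1 X Z)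
    {f : Z ⟶ E} {q : E ⟶ X} (hfq : IsSES f q) : ∃ s : X ⟶ E, s ≫ q = 𝟙 X := by
  obtain ⟨w, hS⟩ := hfq
  have := hS.mono_f
  have := hS.epi_g
  let P := ProjectiveResolution.of X
  let d := P.complex.d 1 0
  let π : P.complex.X 0 ⟶ X := P.π.f 0
  have : Epi π := inferInstanceAs (Epi (P.π.f 0))
  obtain ⟨l, hl⟩ : ∃ l : P.complex.X 0 ⟶ E, l ≫ q = π :=
    ⟨Projective.factorThru _ q, Projective.factorThru_comp _ _⟩
  have hdl : (d ≫ l) ≫ q = 0 := by rw [Category.assoc, hl]; exact P.complex_d_comp_π_f_zero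
  let c : P.complex.X 1 ⟶ Z := hS.exact.lift (d ≫ l) hdl
  have hcf : c ≫ f = d ≫ l := hS.exact.lift_f _ _
  have hcocycle : P.complex.d 2 1 ≫ c = 0 := by
    rw [← cancel_mono f, Category.assoc, hcf, HomologicalComplex.d_comp_d_assoc, zero_comp,
      zero_comp]
  obtain ⟨r, hr⟩ : ∃ r : P.complex.X 0 ⟶ Z, d ≫ r = c := by
    let L := P.complex.linearYonedaObj k Z
    have hex : (L.sc' 0 1 2).Exact := by
      rw [← L.exactAt_iff' 0 1 2 (by simp) (by simp), L.exactAt_iff_isZero_homology]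
      exact IsZero.of_iso hv (P.isoExt 1 Z).symm
    rw [ShortComplex.moduleCat_exact_iff] at hex
    exact hex c hcocycle
  have hφ : d ≫ (l - r ≫ f) = 0 := by
    rw [Preadditive.comp_sub, reassoc_of% hr, hcf, sub_self]
  let s : X ⟶ E := P.isColimitCokernelCofork.desc (CokernelCofork.ofπ _ hφ)
  have hs : π ≫ s = l - r ≫ f := Cofork.IsColimit.π_desc P.isColimitCokernelCofork
  refine ⟨s, (cancel_epi π).1 ?_⟩
  rw [reassoc_of% hs, Preadditive.sub_comp, hl, Category.assoc, w, comp_zero, sub_zero,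
    Category.comp_id]

lemma exists_retraction_of_extVanishes_s10 {X Z E : C} (hv : extVanishes k 1 X Z)
    {f : Z ⟶ E} {q : E ⟶ X} (hfq : IsSES f q) : ∃ ρ : E ⟶ Z, f ≫ ρ = 𝟙 Z := by
  obtain ⟨s, hs⟩ := exists_section_of_extVanishes hv hfq
  obtain ⟨w, hS⟩ := hfq
  exact ⟨_, (ShortComplex.Splitting.ofExactOfSection _ hS.exact s hs hS.mono_f).f_r⟩

lemma exists_extension_of_extVanishes {A B X Z : C} (hv : extVanishes k 1 X Z)
    {u : A ⟶ B} {v : B ⟶ X} (huv : IsSES u v) (f : A ⟶ Z) : ∃ t : B ⟶ Z, u ≫ t = f := by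
  obtain ⟨m, hm⟩ := exists_isSES_pushout_inr huv f
  obtain ⟨ρ, hρ⟩ := exists_retraction_of_extVanishes_s10 hv hm
  exact ⟨pushout.inl u f ≫ ρ, by rw [pushout.condition_assoc, hρ, Category.comp_id]⟩

end ExtensionLemma

lemma exists_isPushout_of_isSES {A B X P Y : C} {u : A ⟶ B} {v : B ⟶ X} {g : A ⟶ P}
    {p : P ⟶ Y} (huv : IsSES u v) (hgp : IsSES g p) {t : B ⟶ P} (hut : u ≫ t = g) :
    ∃ w : X ⟶ Y, IsPushout v t w p := by
  obtain ⟨w₁, hS₁⟩ := huv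
  obtain ⟨w₂, hS₂⟩ := hgp
  have := hS₁.epi_g
  have := hS₂.epi_g
  have hw : u ≫ t ≫ p = 0 := by rw [reassoc_of% hut, w₂]
  let w : X ⟶ Y := hS₁.exact.desc (t ≫ p) hw
  have hvw : v ≫ w = t ≫ p := hS₁.exact.g_desc _ _
  refine ⟨w, .of_isColimit (c := PushoutCocone.mk w p hvw) <|
    PushoutCocone.IsColimit.mk hvw (fun s => hS₂.exact.desc s.inr ?_) (fun s => ?_)
      (fun s => hS₂.exact.g_desc _ _) (fun s φ _ hφ => ?_)⟩
  · change g ≫ s.inr = 0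
    rw [← hut, Category.assoc, ← s.condition, ← Category.assoc, w₁, zero_comp]
  · rw [← cancel_epi v, reassoc_of% hvw, hS₂.exact.g_desc, s.condition]
  · rw [← cancel_epi p, hφ, hS₂.exact.g_desc]

lemma CategoryTheory.IsPushout.isSES_of_mono_comp {A B X P Y : C} {u : A ⟶ B} {v : B ⟶ X}
    {t : B ⟶ P} {w : X ⟶ Y} {p : P ⟶ Y} (h : IsPushout v t w p) (huv : IsSES u v) [Mono (u ≫ t)] :
    IsSES (biprod.lift v (-t)) (biprod.desc w p) := by
  obtain ⟨_, hS⟩ := huv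
  have := hS.mono_f
  have : Mono (biprod.lift v (-t)) := by
    refine Preadditive.mono_of_cancel_zero _ fun x hx => ?_
    have hxv : x ≫ v = 0 := by simpa using hx =≫ biprod.fst
    have hxt : x ≫ t = 0 := by simpa using hx =≫ biprod.snd
    obtain ⟨y, rfl⟩ : ∃ y, y ≫ u = x := ⟨_, hS.exact.lift_f x hxv⟩
    rw [zero_of_comp_mono (u ≫ t) (f := y) (by rwa [← Category.assoc]), zero_comp]
  exact ⟨h.shortComplex.zero, .mk' h.exact_shortComplex ‹_› h.epi_shortComplex_g⟩

theorem stmt10_general (k : Type*) [Field k] [Linear k C]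
    [EnoughProjectives C]
    (M : C → Prop) (hsub : IsAdditiveSubcat M)
    (hproj : ∀ P : C, Projective P → M P)
    (hrigid : ∀ ⦃X Z : C⦄, M X → M Z → extVanishes k 1 X Z)
    {Y ΩY P M₁ M₂ : C} (g : ΩY ⟶ P) (p : P ⟶ Y) (hses₁ : IsSES g p)
    (hP : Projective P)
    (u : ΩY ⟶ M₁) (v : M₁ ⟶ M₂) (hses₂ : IsSES u v) (hM₁ : M M₁) (hM₂ : M M₂) :
    (∃ (a : M₁ ⟶ M₂ ⊞ P) (b : M₂ ⊞ P ⟶ Y), IsSES a b) ∧ MemCone M M Y := by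
  obtain ⟨t, hut⟩ := exists_extension_of_extVanishes (hrigid hM₂ (hproj P hP)) hses₂ g
  obtain ⟨w, hsq⟩ := exists_isPushout_of_isSES hses₂ hses₁ hut
  have : Mono (u ≫ t) := hut ▸ hses₁.2.mono_f
  have hses := hsq.isSES_of_mono_comp hses₂
  exact ⟨⟨_, _, hses⟩, _, _, _, _, hM₁, hsub.sum_mem hM₂ (hproj P hP), hses⟩

theorem stmt10 (k : Type*) [Field k] [Linear k C]
    [EnoughProjectives C] [EnoughInjectives C]
    (hKS : IsKrullSchmidt C) (hfin : ∀ X Y : C, Module.Finite k (X ⟶ Y))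
    (M : C → Prop) (hsub : IsAdditiveSubcat M)
    (hproj : ∀ P : C, Projective P → M P)
    (hrigid : ∀ ⦃X Z : C⦄, M X → M Z → extVanishes k 1 X Z)
    {Y ΩY P M₁ M₂ : C} (g : ΩY ⟶ P) (p : P ⟶ Y) (hses₁ : IsSES g p)
    (hP : Projective P)
    (u : ΩY ⟶ M₁) (v : M₁ ⟶ M₂) (hses₂ : IsSES u v) (hM₁ : M M₁) (hM₂ : M M₂) :
    (∃ (a : M₁ ⟶ M₂ ⊞ P) (b : M₂ ⊞ P ⟶ Y), IsSES a b) ∧ MemCone M M Y :=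
  stmt10_general k M hsub hproj hrigid g p hses₁ hP u v hses₂ hM₁ hM₂
end
end
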